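/- arXiv:0812.4069 — 2 statements merged into one kernel-verified Lean document; each statement's English description precedes it below -/
import Mathlib

section
/- In any magma (V, ν) such that ν(ν(a,b),c) = ν(ν(b,c),a) for all a,b,c, and in which ν is anticommutative in the sense ν(a,b) = -ν(b,a) (working in a vector space over a field of characteristic zero), every product of four elements formed by ν vanishes; in particular ν(ν(ν(a,b),c),d) = 0 for all a,b,c,d. -/
/-- In a vector space over a field of characteristic zero with a bilinear
operation `ν` that is anticommutative and satisfies the cyclic identity
`ν(ν(a,b),c) = ν(ν(b,c),a)`, every product of four elements vanishes; in
particular `ν(ν(ν(a,b),c),d) = 0`. -/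
theorem antiCom_fourfold_product_vanishes {k V : Type*} [Field k] [CharZero k]
    [AddCommGroup V] [Module k V] (ν : V →ₗ[k] V →ₗ[k] V)
    (anti : ∀ a b : V, ν a b = - ν b a)
    (cyc : ∀ a b c : V, ν (ν a b) c = ν (ν b c) a) :
    ∀ a b c d : V, ν (ν (ν a b) c) d = 0 := by
  have swap12 : ∀ a b c : V, ν (ν a b) c = -ν (ν b a) c := by
    intro a b c; rw [anti a b]; simp
  have swap23 : ∀ a b c : V, ν (ν a b) c = -ν (ν a c) b := by
    intro a b c
    rw [cyc a b c, swap12 b c a, cyc c b a, cyc b a c]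
  have key : ∀ a b c d : V, ν (ν (ν a b) c) d = -ν (ν (ν c d) a) b := by
    intro a b c d
    rw [cyc (ν a b) c d, anti (ν c d) (ν a b), cyc a b (ν c d),
      cyc b (ν c d) a]
  intro a b c d
  have h2 : ν (ν (ν c d) a) b = ν (ν (ν a b) c) d := by
    rw [cyc c d a, swap23 (ν d a) c b, cyc d a b, swap23 (ν a b) d c, neg_neg]
  have h3 : ν (ν (ν a b) c) d = -ν (ν (ν a b) c) d := by
    conv_lhs => rw [key a b c d, h2]
  have h4 : (2 : k) • ν (ν (ν a b) c) d = 0 := by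
    rw [two_smul]
    nth_rewrite 1 [h3]
    simp
  exact (smul_eq_zero.mp h4).resolve_left two_ne_zero
end

section
/- Let F be a vector space with a basis B linearly ordered by a well-order, M ⊆ F a subspace, and D ⊆ B the set of monomials that occur as leading monomials of nonzero elements of M. Then the images of the monomials B \ D under the projection F → F/M form a basis of F/M. -/
/-!
The irreducible monomials span a complement of `M`. They are independent modulo `M`, because a
nonzero element of `M` in their span would have an irreducible leading monomial. They span modulo
`M` by well-founded induction: a leading monomial `i` of some `m ∈ M` is congruent modulo `M` to a
combination of smaller monomials, namely the lower terms of `m` divided by its leading coefficient.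
-/

open Submodule

namespace Module.Basis

variable {R F ι : Type*} [AddCommGroup F]

theorem exists_basis_quotient_of_isCompl_span_image [Ring R] [Module R F] (b : Basis ι R F)
    {M : Submodule R F} {s : Set ι} (h : IsCompl M (span R (b '' s))) :
    ∃ c : Basis s R (F ⧸ M), ∀ i, c i = Submodule.Quotient.mk (b i) := by
  rw [Set.image_eq_range] at h
  have hli : LinearIndependent R fun i : s => b i :=
    b.linearIndependent.comp _ Subtype.val_injective
  exact ⟨(Basis.span hli).map (M.quotientEquivOfIsCompl _ h).symm, fun i => by simp⟩

variable [LinearOrder ι]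

section Ring

variable [Ring R] [Module R F]

def leadingMonomials (b : Basis ι R F) (M : Submodule R F) : Set ι :=
  {i | ∃ m ∈ M, m ≠ 0 ∧ i ∈ (b.repr m).support ∧ ∀ j ∈ (b.repr m).support, j ≤ i}

theorem exists_mem_support_forall_le (b : Basis ι R F) {x : F} (hx : x ≠ 0) :
    ∃ i ∈ (b.repr x).support, ∀ j ∈ (b.repr x).support, j ≤ i :=
  Finset.exists_max_image _ id (by simpa using hx)

theorem sub_smul_mem_span_image_Iio (b : Basis ι R F) {x : F} {i : ι}
    (hx : ∀ j ∈ (b.repr x).support, j ≤ i) :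
    x - b.repr x i • b i ∈ span R (b '' Set.Iio i) := by
  rw [b.mem_span_image]
  intro j hj
  have hji : j ≠ i := by rintro rfl; simp at hj
  simp only [Finset.mem_coe, Finsupp.mem_support_iff, map_sub, map_smul, repr_self,
    Finsupp.sub_apply, Finsupp.smul_apply, Finsupp.single_eq_of_ne hji, smul_zero,
    sub_zero] at hj
  exact lt_of_le_of_ne (hx j (Finsupp.mem_support_iff.mpr hj)) hji

theorem disjoint_span_image_compl_leadingMonomials (b : Basis ι R F) (M : Submodule R F) :
    Disjoint M (span R (b '' (b.leadingMonomials M)ᶜ)) := by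
  rw [disjoint_def]
  intro x hxM hxN
  by_contra hx
  obtain ⟨i, hi, hmax⟩ := b.exists_mem_support_forall_le hx
  exact b.mem_span_image.mp hxN hi ⟨x, hxM, hx, hi, hmax⟩

end Ring

section DivisionRing

variable [DivisionRing R] [Module R F] [WellFoundedLT ι]

theorem sup_span_image_compl_leadingMonomials (b : Basis ι R F) (M : Submodule R F) :
    M ⊔ span R (b '' (b.leadingMonomials M)ᶜ) = ⊤ := by
  set N := span R (b '' (b.leadingMonomials M)ᶜ)
  suffices h : ∀ i, b i ∈ M ⊔ N by
    rw [eq_top_iff, ← b.span_eq, span_le]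
    rintro _ ⟨i, rfl⟩
    exact h i
  intro i
  induction i using WellFoundedLT.induction with
  | _ i ih =>
  by_cases hi : i ∈ b.leadingMonomials M
  · obtain ⟨m, hmM, -, hi, hmax⟩ := hi
    have hlower : m - b.repr m i • b i ∈ M ⊔ N :=
      span_le.mpr (by rintro _ ⟨j, hj, rfl⟩; exact ih j hj) (b.sub_smul_mem_span_image_Iio hmax)
    have hlead : b.repr m i • b i ∈ M ⊔ N := by
      simpa using sub_mem (mem_sup_left hmM) hlower
    exact (smul_mem_iff _ (Finsupp.mem_support_iff.mp hi)).mp hlead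
  · exact mem_sup_right (subset_span ⟨i, hi, rfl⟩)

theorem isCompl_span_image_compl_leadingMonomials (b : Basis ι R F) (M : Submodule R F) :
    IsCompl M (span R (b '' (b.leadingMonomials M)ᶜ)) :=
  ⟨b.disjoint_span_image_compl_leadingMonomials M,
    codisjoint_iff.mpr (b.sup_span_image_compl_leadingMonomials M)⟩

end DivisionRing

end Module.Basis

/-- The monomial basis of the quotient: let `F` be a vector space with a basis
`b` indexed by a well-ordered set of monomials and `M` a subspace; let `D` be
the set of monomials occurring as leading monomials (largest basis monomial of
the support) of nonzero elements of `M`. Then the images of the monomials not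
in `D` under the projection `F → F/M` form a basis of `F/M`. -/
theorem quotient_basis_of_irreducible_monomials {k F ι : Type*} [Field k]
    [AddCommGroup F] [Module k F] [LinearOrder ι] [WellFoundedLT ι]
    (b : Module.Basis ι k F) (M : Submodule k F) :
    ∃ c : Module.Basis
        {i : ι // i ∉ {i : ι | ∃ m ∈ M, m ≠ 0 ∧ i ∈ (b.repr m).support ∧
          ∀ j ∈ (b.repr m).support, j ≤ i}} k (F ⧸ M),
      ∀ i, c i = Submodule.Quotient.mk (b i.1) :=
  b.exists_basis_quotient_of_isCompl_span_image (b.isCompl_span_image_compl_leadingMonomials M)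
end
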